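/- arXiv:1906.01812 — 2 statements merged into one kernel-verified Lean document; each statement's English description precedes it below -/
import Mathlib

section
/- Let k ≥ 1 and n1 ≥ n2 ≥ n3 ≥ n4 ≥ k be integers, and let V1, V2, V3, V4 be disjoint sets with |Vi| = ni. Fix a set Z ⊆ V4 with |Z| = k−1, and let G2 be the 4-partite graph consisting of all edges between V1 and V2 ∪ V3 ∪ V4 together with all edges between Z and V2 ∪ V3. Then G2 contains no k pairwise vertex-disjoint triangles, and e(G2) = n1(n2+n3+n4) + (k−1)(n2+n3). -/
/-!
Off `Z`, the graph `G2` is bipartite with sides `V1` and `V2 ∪ V3 ∪ V4`, so every triangle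
meets `Z`; disjoint triangles then meet `Z` in disjoint nonempty sets, so there are at most
`|Z| = k - 1` of them. The edges are counted by the ordered pairs of `V1 × (V2 ∪ V3 ∪ V4)` and
`Z × (V2 ∪ V3)`, each edge arising from exactly one such pair.
-/

theorem Finset.card_le_card_of_pairwise_disjoint_of_inter_nonempty {α : Type*} [DecidableEq α]
    {S : Finset (Finset α)} {Z : Finset α} (hS : (S : Set (Finset α)).Pairwise Disjoint)
    (hSZ : ∀ T ∈ S, (T ∩ Z).Nonempty) : S.card ≤ Z.card :=
  calc S.card ≤ (S.biUnion (· ∩ Z)).card :=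
        card_le_card_biUnion (fun _ hT _ hT' hne => (hS hT hT' hne).mono inter_subset_left
          inter_subset_left) hSZ
    _ ≤ Z.card := card_le_card (biUnion_subset.mpr fun _ _ => inter_subset_right)

namespace SimpleGraph

variable {V : Type*} {G : SimpleGraph V}

theorem IsNClique.inter_nonempty_of_bipartite_off [DecidableEq V] {T Z : Finset V}
    (hT : G.IsNClique 3 T) (p : V → Prop)
    (hp : ∀ u v, G.Adj u v → u ∉ Z → v ∉ Z → (p u ↔ ¬ p v)) : (T ∩ Z).Nonempty := by
  obtain ⟨a, b, c, hab, hac, hbc, rfl⟩ := Finset.card_eq_three.mp hT.card_eq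
  by_contra hTZ
  simp only [Finset.not_nonempty_iff_eq_empty, Finset.eq_empty_iff_forall_notMem,
    Finset.mem_inter, Finset.mem_insert, Finset.mem_singleton] at hTZ
  have hpab := hp a b (hT.1 (by simp) (by simp) hab)
  have hpac := hp a c (hT.1 (by simp) (by simp) hac)
  have hpbc := hp b c (hT.1 (by simp) (by simp) hbc)
  grind

theorem edgeSet_ncard_eq_card (F : Finset (V × V))
    (hF : ∀ u v, G.Adj u v ↔ (u, v) ∈ F ∨ (v, u) ∈ F)
    (hasymm : ∀ u v, (u, v) ∈ F → (v, u) ∉ F) : G.edgeSet.ncard = F.card := by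
  classical
  have hedge : G.edgeSet = ((F.image fun p => s(p.1, p.2) : Finset (Sym2 V)) : Set (Sym2 V)) := by
    ext e
    induction e using Sym2.ind with
    | _ u v =>
      simp only [mem_edgeSet, hF, Finset.coe_image, Set.mem_image, Finset.mem_coe,
        Prod.exists, Sym2.eq_iff]
      grind
  have hinj : Set.InjOn (fun p : V × V => s(p.1, p.2)) F := by
    rintro p hp q hq h
    refine (Sym2.mk_eq_mk_iff.mp h).resolve_right fun hpq => ?_
    subst hpq
    exact hasymm _ _ hq hp
  rw [hedge, Set.ncard_coe_finset, Finset.card_image_of_injOn hinj]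

end SimpleGraph

section G2

variable {V : Type*} [DecidableEq V] {Vp : Fin 4 → Finset V} {Z : Finset V} {G : SimpleGraph V}

theorem disjoint_zero_union_rest (hdisj : ∀ i j : Fin 4, i ≠ j → Disjoint (Vp i) (Vp j)) :
    Disjoint (Vp 0) (Vp 1 ∪ Vp 2 ∪ Vp 3) := by
  simp only [Finset.disjoint_union_right]
  exact ⟨⟨hdisj 0 1 (by decide), hdisj 0 2 (by decide)⟩, hdisj 0 3 (by decide)⟩

variable (hdisj : ∀ i j : Fin 4, i ≠ j → Disjoint (Vp i) (Vp j))
  (hG : ∀ u v : V, G.Adj u v ↔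
      ((u ∈ Vp 0 ∧ v ∈ Vp 1 ∪ Vp 2 ∪ Vp 3) ∨ (v ∈ Vp 0 ∧ u ∈ Vp 1 ∪ Vp 2 ∪ Vp 3) ∨
       (u ∈ Z ∧ v ∈ Vp 1 ∪ Vp 2) ∨ (v ∈ Z ∧ u ∈ Vp 1 ∪ Vp 2)))
include hdisj hG

theorem G2_isNClique_three_inter_nonempty {T : Finset V} (hT : G.IsNClique 3 T) :
    (T ∩ Z).Nonempty := by
  refine hT.inter_nonempty_of_bipartite_off (· ∈ Vp 0) fun u v huv hu hv => ?_
  have h0 : ∀ w ∈ Vp 0, w ∉ Vp 1 ∪ Vp 2 ∪ Vp 3 :=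
    fun _ hw => Finset.disjoint_left.mp (disjoint_zero_union_rest hdisj) hw
  have := h0 u
  have := h0 v
  rw [hG] at huv
  tauto

theorem G2_edgeSet_ncard (hZ : Z ⊆ Vp 3) :
    G.edgeSet.ncard = (Vp 0).card * ((Vp 1).card + (Vp 2).card + (Vp 3).card) +
      Z.card * ((Vp 1).card + (Vp 2).card) := by
  have h0 := disjoint_zero_union_rest hdisj
  have h0' : Disjoint (Vp 0) (Vp 1 ∪ Vp 2) := h0.mono_right Finset.subset_union_left
  have hZ12 : Disjoint Z (Vp 1 ∪ Vp 2) := Finset.disjoint_union_right.mpr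
    ⟨(hdisj 3 1 (by decide)).mono_left hZ, (hdisj 3 2 (by decide)).mono_left hZ⟩
  have hZ0 : Disjoint (Vp 0) Z := (hdisj 0 3 (by decide)).mono_right hZ
  rw [G.edgeSet_ncard_eq_card ((Vp 0 ×ˢ (Vp 1 ∪ Vp 2 ∪ Vp 3)) ∪ Z ×ˢ (Vp 1 ∪ Vp 2))]
  · rw [Finset.card_union_of_disjoint (Finset.disjoint_product.mpr (Or.inl hZ0)),
      Finset.card_product, Finset.card_product,
      Finset.card_union_of_disjoint (Finset.disjoint_union_left.mpr
        ⟨hdisj 1 3 (by decide), hdisj 2 3 (by decide)⟩),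
      Finset.card_union_of_disjoint (hdisj 1 2 (by decide))]
  · intro u v
    simp only [hG, Finset.mem_union, Finset.mem_product]
    tauto
  · intro u v
    simp only [Finset.mem_union (s := _ ×ˢ _), Finset.mem_product]
    rintro (⟨hu, hv⟩ | ⟨hu, hv⟩) (⟨hv', hu'⟩ | ⟨hv', hu'⟩)
    · exact Finset.disjoint_left.mp h0 hu hu'
    · exact Finset.disjoint_left.mp h0' hu hu'
    · exact Finset.disjoint_left.mp h0' hv' hv
    · exact Finset.disjoint_left.mp hZ12 hu hu'

end G2

theorem extremal_construction_G2_general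
    (k : ℕ) (hk : 1 ≤ k) (n : Fin 4 → ℕ)
    (V : Type) [DecidableEq V]
    (Vp : Fin 4 → Finset V)
    (hdisj : ∀ i j : Fin 4, i ≠ j → Disjoint (Vp i) (Vp j))
    (hcard : ∀ i, (Vp i).card = n i)
    (Z : Finset V) (hZ : Z ⊆ Vp 3) (hZcard : Z.card = k - 1)
    (G : SimpleGraph V)
    -- G = G2: all edges between V1 and V2 ∪ V3 ∪ V4, plus all edges between Z and V2 ∪ V3
    (hG : ∀ u v : V, G.Adj u v ↔
      ((u ∈ Vp 0 ∧ v ∈ Vp 1 ∪ Vp 2 ∪ Vp 3) ∨ (v ∈ Vp 0 ∧ u ∈ Vp 1 ∪ Vp 2 ∪ Vp 3) ∨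
       (u ∈ Z ∧ v ∈ Vp 1 ∪ Vp 2) ∨ (v ∈ Z ∧ u ∈ Vp 1 ∪ Vp 2))) :
    (¬ ∃ S : Finset (Finset V), S.card = k ∧ (∀ T ∈ S, G.IsNClique 3 T) ∧
        (S : Set (Finset V)).Pairwise Disjoint) ∧
    G.edgeSet.ncard = n 0 * (n 1 + n 2 + n 3) + (k - 1) * (n 1 + n 2) := by
  refine ⟨?_, ?_⟩
  · rintro ⟨S, hSk, hS3, hSdisj⟩
    have hSZ := Finset.card_le_card_of_pairwise_disjoint_of_inter_nonempty hSdisj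
      fun T hT => G2_isNClique_three_inter_nonempty hdisj hG (hS3 T hT)
    omega
  · rw [G2_edgeSet_ncard hdisj hG hZ, hcard, hcard, hcard, hcard, hZcard]

theorem extremal_construction_G2
    (k : ℕ) (hk : 1 ≤ k) (n : Fin 4 → ℕ)
    (h43 : k ≤ n 3) (h32 : n 3 ≤ n 2) (h21 : n 2 ≤ n 1) (h10 : n 1 ≤ n 0)
    (V : Type) [Fintype V] [DecidableEq V]
    (Vp : Fin 4 → Finset V)
    (hdisj : ∀ i j : Fin 4, i ≠ j → Disjoint (Vp i) (Vp j))
    (hcover : ∀ v : V, ∃ i, v ∈ Vp i)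
    (hcard : ∀ i, (Vp i).card = n i)
    (Z : Finset V) (hZ : Z ⊆ Vp 3) (hZcard : Z.card = k - 1)
    (G : SimpleGraph V)
    -- G = G2: all edges between V1 and V2 ∪ V3 ∪ V4, plus all edges between Z and V2 ∪ V3
    (hG : ∀ u v : V, G.Adj u v ↔
      ((u ∈ Vp 0 ∧ v ∈ Vp 1 ∪ Vp 2 ∪ Vp 3) ∨ (v ∈ Vp 0 ∧ u ∈ Vp 1 ∪ Vp 2 ∪ Vp 3) ∨
       (u ∈ Z ∧ v ∈ Vp 1 ∪ Vp 2) ∨ (v ∈ Z ∧ u ∈ Vp 1 ∪ Vp 2))) :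
    (¬ ∃ S : Finset (Finset V), S.card = k ∧ (∀ T ∈ S, G.IsNClique 3 T) ∧
        (S : Set (Finset V)).Pairwise Disjoint) ∧
    G.edgeSet.ncard = n 0 * (n 1 + n 2 + n 3) + (k - 1) * (n 1 + n 2) :=
  extremal_construction_G2_general k hk n V Vp hdisj hcard Z hZ hZcard G hG
end

section
/- Let k ≥ 1 and let G be a 4-partite graph with parts V1, V2, V3, V4 that contains no k pairwise vertex-disjoint triangles. Suppose v is a vertex incident to k rich edges vu1, …, vuk, where u1, …, uk all lie in the same part of G (an edge xy of G is rich if x and y have at least k common neighbors in a single part). Then the graph obtained from G by deleting the vertex v contains no k−1 pairwise vertex-disjoint triangles. -/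
/-!
Let `S` be `k - 1` disjoint triangles avoiding `v` and `U` the set of their vertices. Each part of
the 4-partite graph is independent, so it meets every triangle in at most one vertex and hence
contains at most `k - 1` vertices of `U`. So one of the `k` vertices `uᵢ` (all in one part) lies
outside `U`, and so does one of the at least `k` common neighbours `w` of `v` and `uᵢ` in one
part. The triangle `{v, uᵢ, w}` is then disjoint from `S`, giving `k` disjoint triangles in `G`.
-/

open Finset

namespace SimpleGraph

variable {V : Type*} [DecidableEq V] {G : SimpleGraph V}

lemma IsClique.card_inter_le_one_of_isIndepSet {s P : Finset V} (hs : G.IsClique (s : Set V))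
    (hP : G.IsIndepSet (P : Set V)) : #(s ∩ P) ≤ 1 := by
  refine card_le_one.mpr fun a ha b hb => ?_
  by_contra hab
  rw [mem_inter] at ha hb
  exact hP ha.2 hb.2 hab (hs ha.1 hb.1 hab)

lemma card_biUnion_inter_le_of_isIndepSet {S : Finset (Finset V)} {P : Finset V}
    (hS : ∀ s ∈ S, G.IsClique (s : Set V)) (hP : G.IsIndepSet (P : Set V)) :
    #(S.biUnion id ∩ P) ≤ #S := by
  calc #(S.biUnion id ∩ P) = #(S.biUnion (· ∩ P)) := by rw [biUnion_inter]; rfl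
    _ ≤ ∑ s ∈ S, #(s ∩ P) := card_biUnion_le
    _ ≤ ∑ _s ∈ S, 1 := sum_le_sum fun s hs => (hS s hs).card_inter_le_one_of_isIndepSet hP
    _ = #S := by rw [sum_const, smul_eq_mul, mul_one]

lemma exists_notMem_biUnion_of_card_lt {S : Finset (Finset V)} {A P : Finset V}
    (hS : ∀ s ∈ S, G.IsClique (s : Set V)) (hP : G.IsIndepSet (P : Set V)) (hAP : A ⊆ P)
    (hcard : #S < #A) : ∃ x ∈ A, x ∉ S.biUnion id := by
  obtain ⟨x, hxA, hx⟩ := exists_mem_notMem_of_card_lt_card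
    ((card_biUnion_inter_le_of_isIndepSet hS hP).trans_lt hcard)
  exact ⟨x, hxA, fun hxU => hx (mem_inter.mpr ⟨hxU, hAP hxA⟩)⟩

end SimpleGraph

namespace Finset

variable {α : Type*} [DecidableEq α]

lemma notMem_of_disjoint_biUnion {S : Finset (Finset α)} {t : Finset α} (ht : t.Nonempty)
    (htS : Disjoint t (S.biUnion id)) : t ∉ S := fun hmem =>
  ht.ne_empty (disjoint_self.mp (htS.mono_right (subset_biUnion_of_mem id hmem)))

lemma pairwise_disjoint_insert_of_disjoint_biUnion {S : Finset (Finset α)} {t : Finset α}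
    (hS : (S : Set (Finset α)).Pairwise Disjoint) (htS : Disjoint t (S.biUnion id)) :
    ((insert t S : Finset (Finset α)) : Set (Finset α)).Pairwise Disjoint := by
  rw [coe_insert]
  exact hS.insert_of_symm fun s hs _ => htS.mono_right (subset_biUnion_of_mem id hs)

end Finset

open SimpleGraph

theorem delete_vertex_with_many_rich_edges_general
    (k : ℕ)
    (V : Type) [Fintype V] [DecidableEq V]
    (G : SimpleGraph V) [DecidableRel G.Adj]
    (Vp : Fin 4 → Finset V)
    (hpartite : ∀ u v : V, G.Adj u v → ∀ i, u ∈ Vp i → v ∈ Vp i → False)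
    -- G contains no k pairwise vertex-disjoint triangles
    (hfree : ¬ ∃ S : Finset (Finset V), S.card = k ∧ (∀ T ∈ S, G.IsNClique 3 T) ∧
        (S : Set (Finset V)).Pairwise Disjoint)
    -- v is incident to k rich edges vu1, …, vuk with u1, …, uk in one part
    (v : V) (u : Fin k → V) (hinj : Function.Injective u)
    (hsamepart : ∃ p : Fin 4, ∀ i : Fin k, u i ∈ Vp p)
    (hadj : ∀ i : Fin k, G.Adj v (u i))
    (hrich : ∀ i : Fin k,
      ∃ p : Fin 4, k ≤ ((G.neighborFinset v ∩ G.neighborFinset (u i)) ∩ Vp p).card) :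
    -- G − v contains no k − 1 pairwise vertex-disjoint triangles
    ¬ ∃ S : Finset (Finset V), S.card = k - 1 ∧
        (∀ T ∈ S, G.IsNClique 3 T ∧ v ∉ T) ∧
        (S : Set (Finset V)).Pairwise Disjoint := by
  have hk : k ≠ 0 := fun hk => hfree ⟨∅, by simp [hk]⟩
  rintro ⟨S, hScard, hStri, hSdisj⟩
  have hcliques : ∀ T ∈ S, G.IsClique (T : Set V) := fun T hT => (hStri T hT).1.isClique
  have hindep (p : Fin 4) : G.IsIndepSet (Vp p : Set V) :=
    fun x hx y hy _ hxy => hpartite x y hxy p hx hy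
  obtain ⟨p₀, hp₀⟩ := hsamepart
  obtain ⟨_, hiA, hiU⟩ := exists_notMem_biUnion_of_card_lt hcliques (hindep p₀)
    (A := univ.image u) (by simpa [subset_iff] using hp₀)
    (by rw [card_image_of_injective _ hinj, card_univ, Fintype.card_fin]; omega)
  obtain ⟨i, -, rfl⟩ := mem_image.mp hiA
  obtain ⟨p, hp⟩ := hrich i
  obtain ⟨w, hwC, hwU⟩ :=
    exists_notMem_biUnion_of_card_lt hcliques (hindep p) inter_subset_right
      (hp.trans_lt' (by omega))
  simp only [mem_inter, mem_neighborFinset] at hwC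
  have hvU : v ∉ S.biUnion id := by simpa using fun T hT => (hStri T hT).2
  have htU : Disjoint {v, u i, w} (S.biUnion id) := by
    simp only [disjoint_insert_left, disjoint_singleton_left]
    exact ⟨hvU, hiU, hwU⟩
  refine hfree ⟨insert {v, u i, w} S, ?_, ?_,
    pairwise_disjoint_insert_of_disjoint_biUnion hSdisj htU⟩
  · rw [card_insert_of_notMem (notMem_of_disjoint_biUnion (insert_nonempty _ _) htU), hScard]
    omega
  · simp only [mem_insert, forall_eq_or_imp]
    exact ⟨is3Clique_triple_iff.mpr ⟨hadj i, hwC.1.1, hwC.1.2⟩, fun T hT => (hStri T hT).1⟩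

theorem delete_vertex_with_many_rich_edges
    (k : ℕ) (hk : 1 ≤ k)
    (V : Type) [Fintype V] [DecidableEq V]
    (G : SimpleGraph V) [DecidableRel G.Adj]
    (Vp : Fin 4 → Finset V)
    (hdisj : ∀ i j : Fin 4, i ≠ j → Disjoint (Vp i) (Vp j))
    (hcover : ∀ v : V, ∃ i, v ∈ Vp i)
    (hpartite : ∀ u v : V, G.Adj u v → ∀ i, u ∈ Vp i → v ∈ Vp i → False)
    -- G contains no k pairwise vertex-disjoint triangles
    (hfree : ¬ ∃ S : Finset (Finset V), S.card = k ∧ (∀ T ∈ S, G.IsNClique 3 T) ∧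
        (S : Set (Finset V)).Pairwise Disjoint)
    -- v is incident to k rich edges vu1, …, vuk with u1, …, uk in one part
    (v : V) (u : Fin k → V) (hinj : Function.Injective u)
    (hsamepart : ∃ p : Fin 4, ∀ i : Fin k, u i ∈ Vp p)
    (hadj : ∀ i : Fin k, G.Adj v (u i))
    (hrich : ∀ i : Fin k,
      ∃ p : Fin 4, k ≤ ((G.neighborFinset v ∩ G.neighborFinset (u i)) ∩ Vp p).card) :
    -- G − v contains no k − 1 pairwise vertex-disjoint triangles
    ¬ ∃ S : Finset (Finset V), S.card = k - 1 ∧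
        (∀ T ∈ S, G.IsNClique 3 T ∧ v ∉ T) ∧
        (S : Set (Finset V)).Pairwise Disjoint :=
  delete_vertex_with_many_rich_edges_general k V G Vp hpartite hfree v u hinj hsamepart hadj hrich
end
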